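/- Selection generator identity: for n ≥ 1, ℓ ≥ 2, a colouring rule p = (p_0,…,p_ℓ) ∈ ℝ^{ℓ+1} with p_0 = 0, p_ℓ = 1, v ∈ ℝ^{n+1} and x ∈ [0,1]: ⟨B_{n+ℓ−1}(x), S^{n,ℓ}v⟩ − ⟨B_n(x), v⟩ = ( E[p_{Y}] − x ) · E[ v_{W+1} − v_{W} ], where Y ~ Binomial(ℓ, x) and W ~ Binomial(n−1, x). Equivalently, the right-hand side equals (E[p_Y] − x) · (1/n) · (d/dx)⟨B_n(x), v⟩. -/

import Mathlib

/-- The Bernstein basis polynomial. -/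
noncomputable def bern (n i : ℕ) (x : ℝ) : ℝ := (n.choose i : ℝ) * x^i * (1-x)^(n-i)

/-- Hypergeometric pmf: `P(K_i = j)` for a sample of size `i` from `n + ℓ - 1` objects
of which `ℓ` are marked. -/
noncomputable def hpmf (n ℓ i j : ℕ) : ℝ :=
  if j ≤ i then ((ℓ.choose j : ℝ) * ((n-1).choose (i-j) : ℝ)) / ((n+ℓ-1).choose i : ℝ) else 0

/-- The selection operator `S^{n,ℓ}` with colouring rule `p`. -/
noncomputable def sel (n ℓ : ℕ) (p : ℕ → ℝ) (v : ℕ → ℝ) (i : ℕ) : ℝ :=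
  ∑ j ∈ Finset.range (ℓ+1), hpmf n ℓ i j * (p j * v (i + 1 - j) + (1 - p j) * v (i - j))

/-!
If `I ~ Bin(n+ℓ-1, x)` and, given `I`, `K` is hypergeometric, then `K ~ Bin(ℓ, x)` and
`I - K ~ Bin(n-1, x)` are independent: the hypergeometric weights turn the product
`b_{j,ℓ} b_{k,n-1}` into `b_{j+k,n+ℓ-1}`. Hence `⟨B_{n+ℓ-1}, S v⟩ = P E[v_{W+1}] + (1-P) E[v_W]`
with `P = E[p_Y]`, while degree elevation gives `⟨B_n, v⟩ = x E[v_{W+1}] + (1-x) E[v_W]`.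
Subtracting gives the identity, and the derivative form is the classical formula
`(d/dx)⟨B_n, v⟩ = n ⟨B_{n-1}, Δv⟩`.
-/

open Finset Polynomial

/-- The paper's `⟨B_m(x), w⟩`. -/
noncomputable def bernSum (m : ℕ) (w : ℕ → ℝ) (x : ℝ) : ℝ :=
  ∑ i ∈ range (m + 1), w i * bern m i x

lemma bern_eq_eval (n i : ℕ) (x : ℝ) : bern n i x = (bernsteinPolynomial ℝ n i).eval x := by
  simp [bern, bernsteinPolynomial]

lemma bern_eq_zero_of_lt {n i : ℕ} (h : n < i) (x : ℝ) : bern n i x = 0 := by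
  simp [bern, Nat.choose_eq_zero_of_lt h]

lemma bern_succ_zero (m : ℕ) (x : ℝ) : bern (m + 1) 0 x = (1 - x) * bern m 0 x := by
  simp only [bern, Nat.choose_zero_right, Nat.cast_one, pow_zero, mul_one, tsub_zero, pow_succ,
    one_mul]
  ring

lemma bern_succ_succ (m i : ℕ) (x : ℝ) :
    bern (m + 1) (i + 1) x = x * bern m i x + (1 - x) * bern m (i + 1) x := by
  rcases lt_trichotomy i m with h | rfl | h
  · have hexp₁ : m + 1 - (i + 1) = m - (i + 1) + 1 := by omega
    have hexp₂ : m - i = m - (i + 1) + 1 := by omega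
    simp only [bern, Nat.choose_succ_succ, hexp₁, hexp₂]
    push_cast
    ring
  · simp [bern, pow_succ, mul_comm]
  · simp [bern_eq_zero_of_lt h, bern_eq_zero_of_lt (Nat.succ_lt_succ h),
      bern_eq_zero_of_lt (Nat.lt_succ_of_lt h)]

lemma hasDerivAt_bern (n i : ℕ) (x : ℝ) :
    HasDerivAt (bern n i) ((derivative (bernsteinPolynomial ℝ n i)).eval x) x := by
  rw [show bern n i = fun y => (bernsteinPolynomial ℝ n i).eval y from funext (bern_eq_eval n i)]
  exact Polynomial.hasDerivAt _ x

/-- Summation by parts against a two-term recursion, the common shape of degree elevation and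
of differentiation in the Bernstein basis. -/
lemma sum_range_mul_of_recursion {R : Type*} [CommRing R] (m : ℕ) (w f g : ℕ → R) (a c : R)
    (hf : f (m + 1) = 0) (hg_zero : g 0 = c * f 0)
    (hg_succ : ∀ i, g (i + 1) = a * f i + c * f (i + 1)) :
    ∑ i ∈ range (m + 2), w i * g i =
      a * ∑ k ∈ range (m + 1), w (k + 1) * f k + c * ∑ k ∈ range (m + 1), w k * f k := by
  have hshift : ∑ k ∈ range (m + 1), w k * f k =
      w 0 * f 0 + ∑ k ∈ range (m + 1), w (k + 1) * f (k + 1) := by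
    have h := sum_range_succ (fun k => w k * f k) (m + 1)
    rw [sum_range_succ', hf, mul_zero, add_zero] at h
    linear_combination -h
  rw [sum_range_succ', hshift, hg_zero]
  simp only [hg_succ, mul_add, sum_add_distrib, mul_sum, mul_left_comm (w _)]
  ring

lemma bernSum_linear (m : ℕ) (a b : ℝ) (u w : ℕ → ℝ) (x : ℝ) :
    bernSum m (fun k => a * u k + b * w k) x = a * bernSum m u x + b * bernSum m w x := by
  simp only [bernSum, mul_sum, ← sum_add_distrib]
  exact sum_congr rfl fun _ _ => by ring

lemma bernSum_sub (m : ℕ) (u w : ℕ → ℝ) (x : ℝ) :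
    bernSum m (fun k => u k - w k) x = bernSum m u x - bernSum m w x := by
  simp only [bernSum, sub_mul, sum_sub_distrib]

lemma bernSum_one (m : ℕ) (x : ℝ) : bernSum m (fun _ => 1) x = 1 := by
  simp [bernSum, bern_eq_eval, ← eval_finsetSum, bernsteinPolynomial.sum]

lemma bernSum_succ (m : ℕ) (w : ℕ → ℝ) (x : ℝ) :
    bernSum (m + 1) w x = x * bernSum m (fun k => w (k + 1)) x + (1 - x) * bernSum m w x :=
  sum_range_mul_of_recursion m w (bern m · x) (bern (m + 1) · x) x (1 - x)
    (bern_eq_zero_of_lt (Nat.lt_succ_self m) x) (bern_succ_zero m x) (bern_succ_succ m · x)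

lemma hasDerivAt_bernSum (m : ℕ) (w : ℕ → ℝ) (x : ℝ) :
    HasDerivAt (bernSum (m + 1) w)
      ((m + 1) * (bernSum m (fun k => w (k + 1)) x - bernSum m w x)) x := by
  have h : HasDerivAt (bernSum (m + 1) w)
      (∑ i ∈ range (m + 2), w i * (derivative (bernsteinPolynomial ℝ (m + 1) i)).eval x) x :=
    HasDerivAt.fun_sum fun i _ => (hasDerivAt_bern (m + 1) i x).const_mul (w i)
  refine h.congr_deriv ?_
  rw [sum_range_mul_of_recursion m w (bern m · x)
    (fun i => (derivative (bernsteinPolynomial ℝ (m + 1) i)).eval x) (m + 1) (-(m + 1))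
    (bern_eq_zero_of_lt (Nat.lt_succ_self m) x)]
  · simp only [bernSum]
    ring
  · simp [bernsteinPolynomial.derivative_zero, bern_eq_eval]
  · intro i
    simp only [bernsteinPolynomial.derivative_succ, Nat.cast_add, Nat.cast_one,
      add_tsub_cancel_right, eval_mul, eval_add, eval_natCast, eval_one, eval_sub, bern_eq_eval]
    ring

lemma hpmf_mul_bern {m ℓ j k : ℕ} (hj : j ≤ ℓ) (hk : k ≤ m) (x : ℝ) :
    hpmf (m + 1) ℓ (j + k) j * bern (m + ℓ) (j + k) x = bern ℓ j x * bern m k x := by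
  have hchoose : ((m + ℓ).choose (j + k) : ℝ) ≠ 0 := by
    exact_mod_cast (Nat.choose_pos (by omega)).ne'
  have hexp : m + ℓ - (j + k) = (ℓ - j) + (m - k) := by omega
  simp only [hpmf, bern, Nat.le_add_right, if_true, Nat.add_sub_cancel_left, Nat.add_sub_cancel,
    show m + 1 + ℓ - 1 = m + ℓ by omega, hexp]
  field_simp
  ring

lemma hpmf_eq_zero_of_notMem_Ico {m ℓ i j : ℕ} (h : i ∉ Ico j (j + m + 1)) : hpmf (m + 1) ℓ i j = 0 := by
  rw [mem_Ico, not_and_or, not_le, not_lt] at h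
  rcases h with h | h
  · simp [hpmf, h.not_ge]
  · simp [hpmf, Nat.choose_eq_zero_of_lt (show m < i - j by omega)]

lemma sum_hpmf_mul_bern {m ℓ j : ℕ} (hj : j ≤ ℓ) (g : ℕ → ℝ) (x : ℝ) :
    ∑ i ∈ range (m + ℓ + 1), hpmf (m + 1) ℓ i j * g i * bern (m + ℓ) i x =
      bern ℓ j x * bernSum m (fun k => g (j + k)) x := by
  have hsub : Ico j (j + m + 1) ⊆ range (m + ℓ + 1) := by
    intro i hi
    rw [mem_Ico] at hi
    rw [mem_range]
    omega
  rw [← sum_subset hsub fun i _ hi => by rw [hpmf_eq_zero_of_notMem_Ico hi, zero_mul, zero_mul],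
    sum_Ico_eq_sum_range, show j + m + 1 - j = m + 1 by omega, bernSum, mul_sum]
  refine sum_congr rfl fun k hk => ?_
  rw [mul_right_comm, hpmf_mul_bern hj (Nat.lt_succ_iff.mp (mem_range.mp hk))]
  ring

lemma bernSum_sel (m ℓ : ℕ) (p v : ℕ → ℝ) (x : ℝ) :
    bernSum (m + ℓ) (sel (m + 1) ℓ p v) x =
      bernSum ℓ p x * bernSum m (fun k => v (k + 1)) x + (1 - bernSum ℓ p x) * bernSum m v x := by
  set S₁ := bernSum m (fun k => v (k + 1)) x
  set S₀ := bernSum m v x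
  have hcolour : ∀ j ∈ range (ℓ + 1),
      ∑ i ∈ range (m + ℓ + 1),
          hpmf (m + 1) ℓ i j * (p j * v (i + 1 - j) + (1 - p j) * v (i - j)) * bern (m + ℓ) i x =
        bern ℓ j x * (p j * S₁ + (1 - p j) * S₀) := by
    intro j hj
    rw [sum_hpmf_mul_bern (Nat.lt_succ_iff.mp (mem_range.mp hj)), ← bernSum_linear]
    simp only [add_assoc, Nat.add_sub_cancel_left]
  have hweights : ∑ j ∈ range (ℓ + 1), bern ℓ j x * (p j * S₁ + (1 - p j) * S₀) =
      bernSum ℓ (fun j => S₁ * p j + S₀ * (1 - p j)) x :=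
    sum_congr rfl fun j _ => by ring
  conv_lhs => rw [bernSum]; simp only [sel, sum_mul]
  rw [sum_comm, sum_congr rfl hcolour, hweights, bernSum_linear, bernSum_sub, bernSum_one]
  ring

theorem selection_generator_bernstein_general (n ℓ : ℕ) (hn : 1 ≤ n)
    (p : ℕ → ℝ) (v : ℕ → ℝ)
    (x : ℝ) :
    (∑ i ∈ Finset.range (n+ℓ), sel n ℓ p v i * bern (n+ℓ-1) i x) -
        (∑ i ∈ Finset.range (n+1), v i * bern n i x) =
      ((∑ j ∈ Finset.range (ℓ+1), p j * bern ℓ j x) - x) *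
        (∑ i ∈ Finset.range n, (v (i+1) - v i) * bern (n-1) i x) ∧
    ((∑ j ∈ Finset.range (ℓ+1), p j * bern ℓ j x) - x) *
        (∑ i ∈ Finset.range n, (v (i+1) - v i) * bern (n-1) i x) =
      ((∑ j ∈ Finset.range (ℓ+1), p j * bern ℓ j x) - x) * (1 / (n : ℝ)) *
        deriv (fun y => ∑ i ∈ Finset.range (n+1), v i * bern n i y) x := by
  obtain ⟨m, rfl⟩ : ∃ m, n = m + 1 := ⟨n - 1, by omega⟩
  rw [show m + 1 + ℓ = m + ℓ + 1 by ring, Nat.add_sub_cancel, Nat.add_sub_cancel]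
  change bernSum (m + ℓ) (sel (m + 1) ℓ p v) x - bernSum (m + 1) v x =
      (bernSum ℓ p x - x) * bernSum m (fun i => v (i + 1) - v i) x ∧
    (bernSum ℓ p x - x) * bernSum m (fun i => v (i + 1) - v i) x =
      (bernSum ℓ p x - x) * (1 / ((m + 1 : ℕ) : ℝ)) * deriv (bernSum (m + 1) v) x
  rw [bernSum_sel, bernSum_succ, (hasDerivAt_bernSum m v x).deriv, bernSum_sub]
  constructor
  · ring
  · push_cast
    field_simp

/-- Selection generator identity in the Bernstein basis.  Here
`∑ j, p j * bern ℓ j x = E[p_Y]` with `Y ~ Bin(ℓ,x)` and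
`∑ i, (v (i+1) - v i) * bern (n-1) i x = E[v_{W+1} - v_W]` with `W ~ Bin(n-1,x)`. -/
theorem selection_generator_bernstein (n ℓ : ℕ) (hn : 1 ≤ n) (hℓ : 2 ≤ ℓ)
    (p : ℕ → ℝ) (hp0 : p 0 = 0) (hpℓ : p ℓ = 1) (v : ℕ → ℝ)
    (x : ℝ) (hx : x ∈ Set.Icc (0:ℝ) 1) :
    (∑ i ∈ Finset.range (n+ℓ), sel n ℓ p v i * bern (n+ℓ-1) i x) -
        (∑ i ∈ Finset.range (n+1), v i * bern n i x) =
      ((∑ j ∈ Finset.range (ℓ+1), p j * bern ℓ j x) - x) *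
        (∑ i ∈ Finset.range n, (v (i+1) - v i) * bern (n-1) i x) ∧
    ((∑ j ∈ Finset.range (ℓ+1), p j * bern ℓ j x) - x) *
        (∑ i ∈ Finset.range n, (v (i+1) - v i) * bern (n-1) i x) =
      ((∑ j ∈ Finset.range (ℓ+1), p j * bern ℓ j x) - x) * (1 / (n : ℝ)) *
        deriv (fun y => ∑ i ∈ Finset.range (n+1), v i * bern n i y) x :=
  selection_generator_bernstein_general n ℓ hn p v x
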